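/- Let m = 2^k for an integer k ≥ 1 and let n = m². The Sylvester–Hadamard matrix H_n of size n×n, defined by H_n[i,j] = (−1)^{⟨i,j⟩} where ⟨i,j⟩ denotes the sum over t of the products of the t-th binary digits of i and j, is a Monarch matrix: H_n ∈ M(m, n). -/

import Mathlib

open Matrix

/-- `BD b n R`: `R` is block-diagonal with `n/b` diagonal blocks of size `b × b`. -/
def BD (b n : ℕ) (R : Matrix (Fin n) (Fin n) ℝ) : Prop :=
  ∀ i j : Fin n, i.val / b ≠ j.val / b → R i j = 0

/-- `DB b n L`: `L[i,j] = 0` whenever `i ≢ j (mod b)`. -/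
def DB (b n : ℕ) (L : Matrix (Fin n) (Fin n) ℝ) : Prop :=
  ∀ i j : Fin n, i.val % b ≠ j.val % b → L i j = 0

/-!
Write an index of size `2^k · 2^k` as `i = b + 2^k a` with `a, b < 2^k`. The low `k` binary
digits of `i` are those of `b` and the high ones those of `a`, so the Sylvester–Hadamard matrix
`H_{2^k · 2^k}` is the Kronecker product `H_{2^k} ⊗ H_{2^k}`. A Kronecker product factors as
`A ⊗ B = (A ⊗ 1) (1 ⊗ B)`, where `A ⊗ 1` only couples indices with the same `b`, i.e. congruent
modulo `2^k`, and `1 ⊗ B` is block-diagonal with blocks indexed by `a`.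
-/

/-- The set `M(b, n)` of Monarch matrices. -/
def IsMonarch (b n : ℕ) (M : Matrix (Fin n) (Fin n) ℝ) : Prop :=
  ∃ L R : Matrix (Fin n) (Fin n) ℝ, DB b n L ∧ BD b n R ∧ M = L * R

open Kronecker in
theorem isMonarch_reindex_kronecker {p m : ℕ} (A : Matrix (Fin p) (Fin p) ℝ)
    (B : Matrix (Fin m) (Fin m) ℝ) :
    IsMonarch m (p * m) (reindex finProdFinEquiv finProdFinEquiv (A ⊗ₖ B)) := by
  refine ⟨reindex finProdFinEquiv finProdFinEquiv (A ⊗ₖ 1),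
    reindex finProdFinEquiv finProdFinEquiv (1 ⊗ₖ B), ?_, ?_, ?_⟩
  · intro i j hij
    have hne : i.modNat ≠ j.modNat := fun h => hij (congrArg Fin.val h)
    simp [hne]
  · intro i j hij
    have hne : i.divNat ≠ j.divNat := fun h => hij (congrArg Fin.val h)
    simp [hne]
  · rw [← coe_reindexAlgEquiv ℝ ℝ, ← map_mul, ← mul_kronecker_mul, mul_one, one_mul]

theorem add_two_pow_mul_div_two_pow_mod_two_of_lt {k t : ℕ} (a b : ℕ) (ht : t < k) :
    (b + 2 ^ k * a) / 2 ^ t % 2 = b / 2 ^ t % 2 := by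
  obtain ⟨c, hc⟩ : 2 ^ t * 2 ∣ 2 ^ k := by rw [← pow_succ]; exact Nat.pow_dvd_pow 2 ht
  rw [← Nat.mod_mul_right_div_self, ← Nat.mod_mul_right_div_self, hc, mul_assoc,
    Nat.add_mul_mod_self_left]

theorem add_two_pow_mul_div_two_pow_add_mod_two {k b : ℕ} (a t : ℕ) (hb : b < 2 ^ k) :
    (b + 2 ^ k * a) / 2 ^ (k + t) % 2 = a / 2 ^ t % 2 := by
  rw [pow_add, ← Nat.div_div_eq_div_mul, Nat.add_mul_div_left _ _ (by positivity),
    Nat.div_eq_of_lt hb, zero_add]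

theorem sum_range_add_digit_mul_digit {k l a b c d : ℕ} (hb : b < 2 ^ k) (hd : d < 2 ^ k) :
    ∑ t ∈ Finset.range (k + l), (b + 2 ^ k * a) / 2 ^ t % 2 * ((d + 2 ^ k * c) / 2 ^ t % 2) =
      ∑ t ∈ Finset.range k, b / 2 ^ t % 2 * (d / 2 ^ t % 2) +
        ∑ t ∈ Finset.range l, a / 2 ^ t % 2 * (c / 2 ^ t % 2) := by
  rw [Finset.sum_range_add]
  congr 1
  · refine Finset.sum_congr rfl fun t ht => ?_
    have htk := Finset.mem_range.mp ht
    rw [add_two_pow_mul_div_two_pow_mod_two_of_lt a b htk,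
      add_two_pow_mul_div_two_pow_mod_two_of_lt c d htk]
  · refine Finset.sum_congr rfl fun t _ => ?_
    rw [add_two_pow_mul_div_two_pow_add_mod_two a t hb,
      add_two_pow_mul_div_two_pow_add_mod_two c t hd]

noncomputable def sylvesterHadamard (k : ℕ) : Matrix (Fin (2 ^ k)) (Fin (2 ^ k)) ℝ :=
  of fun i j => (-1) ^ ∑ t ∈ Finset.range k, i.val / 2 ^ t % 2 * (j.val / 2 ^ t % 2)

open Kronecker in
theorem reindex_sylvesterHadamard_kronecker (l k : ℕ) :
    reindex finProdFinEquiv finProdFinEquiv (sylvesterHadamard l ⊗ₖ sylvesterHadamard k) =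
      of fun i j : Fin (2 ^ l * 2 ^ k) =>
        (-1 : ℝ) ^ ∑ t ∈ Finset.range (k + l), i.val / 2 ^ t % 2 * (j.val / 2 ^ t % 2) := by
  ext i j
  obtain ⟨⟨a, b⟩, rfl⟩ := finProdFinEquiv.surjective i
  obtain ⟨⟨c, d⟩, rfl⟩ := finProdFinEquiv.surjective j
  simp only [reindex_apply, submatrix_apply, Equiv.symm_apply_apply, kroneckerMap_apply,
    sylvesterHadamard, of_apply, finProdFinEquiv_apply_val]
  rw [sum_range_add_digit_mul_digit b.isLt d.isLt, pow_add, mul_comm]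

theorem hadamard_is_monarch_general (k : ℕ) (m : ℕ) (hm : m = 2 ^ k) :
    ∃ L R : Matrix (Fin (m * m)) (Fin (m * m)) ℝ,
      DB m (m * m) L ∧ BD m (m * m) R ∧
      (Matrix.of fun i j : Fin (m * m) =>
        (-1 : ℝ) ^ (∑ t ∈ Finset.range (2 * k), (i.val / 2 ^ t % 2) * (j.val / 2 ^ t % 2)))
        = L * R := by
  subst hm
  have h := isMonarch_reindex_kronecker (sylvesterHadamard k) (sylvesterHadamard k)
  rw [reindex_sylvesterHadamard_kronecker, ← two_mul] at h
  exact h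

/-- for `m = 2^k` and `n = m²`, the Sylvester–Hadamard matrix
`H_n[i,j] = (−1)^{Σ_t i_t j_t}` (sum over binary digits) is a Monarch matrix:
`H_n ∈ M(m, n)`, i.e. `H_n = L · R` with `L ∈ DB(m,n)` and `R ∈ BD(m,n)`. -/
theorem hadamard_is_monarch (k : ℕ) (hk : 1 ≤ k) (m : ℕ) (hm : m = 2 ^ k) :
    ∃ L R : Matrix (Fin (m * m)) (Fin (m * m)) ℝ,
      DB m (m * m) L ∧ BD m (m * m) R ∧
      (Matrix.of fun i j : Fin (m * m) =>
        (-1 : ℝ) ^ (∑ t ∈ Finset.range (2 * k), (i.val / 2 ^ t % 2) * (j.val / 2 ^ t % 2)))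
        = L * R :=
  hadamard_is_monarch_general k m hm
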